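/- arXiv:1206.0154 — 2 statements merged into one kernel-verified Lean document; each statement's English description precedes it below -/
import Mathlib

section
/- For every natural number k ≥ 1 and every real p with 1/(2k) ≤ p ≤ 1/k, we have k·p·(1 − p)^{k−1} ≥ 1/(2·e). -/
/-! From `1 + x ≤ eˣ` at `x = 1/n` we get `(n/(n+1))ⁿ ≥ e⁻¹`, so for `p ≤ 1/k` the factor
`(1 - p)^{k-1} ≥ (1 - 1/k)^{k-1}` is at least `1/e`, while `p ≥ 1/(2k)` gives `k·p ≥ 1/2`. -/

open Real

theorem Real.exp_neg_one_le_div_add_one_pow (n : ℕ) : exp (-1) ≤ ((n : ℝ) / (n + 1)) ^ n := by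
  rcases Nat.eq_zero_or_pos n with rfl | hn
  · simp
  have hroot : exp (-(n : ℝ)⁻¹) ≤ n / (n + 1) := by
    have hinv : (n : ℝ) / (n + 1) = ((n : ℝ)⁻¹ + 1)⁻¹ := by field_simp; ring
    rw [exp_neg, hinv]
    exact inv_anti₀ (by positivity) (add_one_le_exp _)
  calc exp (-1) = exp (-(n : ℝ)⁻¹) ^ n := by rw [← exp_nat_mul]; field_simp
    _ ≤ _ := by gcongr

theorem Real.exp_neg_one_le_one_sub_pow {n : ℕ} {p : ℝ} (hp : p ≤ 1 / (n + 1)) :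
    exp (-1) ≤ (1 - p) ^ n :=
  calc exp (-1) ≤ ((n : ℝ) / (n + 1)) ^ n := exp_neg_one_le_div_add_one_pow n
    _ = (1 - 1 / (n + 1)) ^ n := by field_simp; ring
    _ ≤ (1 - p) ^ n := by
      gcongr
      exact sub_nonneg.2 (div_le_one_of_le₀ (by simp) (by positivity))

/-- **Single-round progress estimate of the Decay strategy.**
For every natural `k ≥ 1` and real `p` with `1/(2k) ≤ p ≤ 1/k`,
`k·p·(1 − p)^{k−1} ≥ 1/(2·e)`. -/
theorem decay_single_round_progress (k : ℕ) (hk : 1 ≤ k) (p : ℝ)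
    (hp1 : 1 / (2 * k) ≤ p) (hp2 : p ≤ 1 / k) :
    1 / (2 * Real.exp 1) ≤ k * p * (1 - p) ^ (k - 1) := by
  obtain ⟨n, rfl⟩ := Nat.exists_eq_add_of_le' hk
  push_cast at hp1 hp2 ⊢
  have hkp : 1 / 2 ≤ (n + 1) * p := by
    rw [div_le_iff₀ (by positivity)] at hp1
    linarith
  calc 1 / (2 * exp 1) = 1 / 2 * exp (-1) := by rw [exp_neg]; ring
    _ ≤ (n + 1) * p * (1 - p) ^ n :=
      mul_le_mul hkp (exp_neg_one_le_one_sub_pow hp2) (exp_pos _).le (by linarith)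
end

section
/- Let η ∈ ℕ with η ≥ 2, let Δ be a real with 2 ≤ Δ ≤ η, and set q = Δ/(2η). Let σ : Fin L → Finset (Fin η) be a transmission schedule and let s* ∈ Fin η be a sender that is not lost in σ (no round t has σ_t = {s*}) and whose potential satisfies Φ_σ(s*) ≤ Δ·(ln η)/(6η). Then, under the product Bernoulli(q) measure on ω : Fin η → Bool (modeling the random set of sender neighbors of one fixed receiver), the probability of the event {ω : ω s* = true, and for every round t with s* ∈ σ_t there exists j ∈ σ_t with j ≠ s* and ω j = true} is at least 1/η². (This is the per-receiver failure claim in the paper's acknowledgment lower bound: with probability at least 1/η², the receiver is a neighbor of s* yet never receives s*'s message because every transmission of s* collides.) -/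
open MeasureTheory

/-- The Bernoulli(q) measure on `Bool`: `true` has mass `q`, `false` has mass `1 - q`. -/
noncomputable def bernoulliMeasure (q : ℝ) : Measure Bool :=
  ENNReal.ofReal q • Measure.dirac true + ENNReal.ofReal (1 - q) • Measure.dirac false

/-- The product Bernoulli(q) measure on `Fin η → Bool`, modeling the random set
of sender neighbors of one fixed receiver: `ω j = true` means sender `j` is
adjacent to the receiver. -/
noncomputable def productBernoulli (η : ℕ) (q : ℝ) : Measure (Fin η → Bool) :=
  Measure.pi fun _ : Fin η => bernoulliMeasure q

/-! The event is the intersection of the increasing events `{ω | ω s* = true}` and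
`B_t = {ω | some j ∈ σ_t \ {s*} has ω j = true}`, and the product Bernoulli measure is
log-supermodular, so by the Harris (FKG) inequality its probability is at least
`q · ∏_t (1 - (1 - q) ^ (|σ_t| - 1))`. Since `exp (-x) + exp (-1/x) ≤ 1` and
`|σ_t| ≤ 2 (|σ_t| - 1)` for a sender that is not lost, each factor is at least
`exp (-2 / (q |σ_t|))`; so the product is at least
`exp (-(2/q) Φ(s*)) ≥ exp (-(2/3) log η) ≥ 1/η`, while `q ≥ 1/η`. -/

lemma Bool.eq_true_of_le {a b : Bool} (hab : a ≤ b) (ha : a = true) : b = true :=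
  top_le_iff.1 (ha ▸ hab : true ≤ b)

lemma Real.exp_neg_add_exp_neg_inv_le_one {x : ℝ} (hx : 0 < x) :
    Real.exp (-x) + Real.exp (-x⁻¹) ≤ 1 := by
  have h_exp_neg_le : ∀ y : ℝ, 0 ≤ y → Real.exp (-y) ≤ (1 + y)⁻¹ := fun y hy => by
    rw [Real.exp_neg]
    exact inv_anti₀ (by linarith) (by linarith [Real.add_one_le_exp y])
  calc Real.exp (-x) + Real.exp (-x⁻¹) ≤ (1 + x)⁻¹ + (1 + x⁻¹)⁻¹ :=
        add_le_add (h_exp_neg_le x hx.le) (h_exp_neg_le x⁻¹ (inv_nonneg.2 hx.le))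
    _ = 1 := by field_simp; ring

lemma Real.exp_neg_inv_le_one_sub_one_sub_pow {q : ℝ} (hq1 : q ≤ 1) {m : ℕ}
    (hqm : 0 < q * m) : Real.exp (-(q * m)⁻¹) ≤ 1 - (1 - q) ^ m := by
  have h_pow : (1 - q) ^ m ≤ Real.exp (-(q * m)) := calc
    (1 - q) ^ m ≤ Real.exp (-q) ^ m :=
      pow_le_pow_left₀ (by linarith) (Real.one_sub_le_exp_neg q) m
    _ = Real.exp (-(q * m)) := by rw [← Real.exp_nat_mul]; ring_nf
  linarith [Real.exp_neg_add_exp_neg_inv_le_one hqm]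

lemma Finset.card_le_two_mul_card_erase {α : Type*} [DecidableEq α] {s : Finset α} {a : α}
    (ha : a ∈ s) (hs : s ≠ {a}) : s.card ≤ 2 * (s.erase a).card := by
  have h_one_lt : 1 < s.card :=
    Finset.one_lt_card_iff_nontrivial.2 ((Finset.nontrivial_iff_ne_singleton ha).2 hs)
  rw [Finset.card_erase_of_mem ha]
  omega

lemma measureReal_eq_sum_mul_indicator {α : Type*} [Fintype α] [MeasurableSpace α]
    [MeasurableSingletonClass α] (μ : Measure α) [IsFiniteMeasure μ] (s : Set α) :
    μ.real s = ∑ a, μ.real {a} * s.indicator 1 a := by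
  classical
  simp [Set.indicator_apply, ← Finset.sum_filter]

section Harris

variable {α : Type*} [Fintype α] [DistribLattice α] [MeasurableSpace α]
  [MeasurableSingletonClass α] (μ : Measure α) [IsProbabilityMeasure μ]

omit [Fintype α] [MeasurableSpace α] [MeasurableSingletonClass α] in
lemma IsUpperSet.monotone_indicator_one {s : Set α} (hs : IsUpperSet s) :
    Monotone (s.indicator (1 : α → ℝ)) := by
  intro a b hab
  by_cases ha : a ∈ s
  · simp [ha, hs hab ha]
  · simp only [Set.indicator_of_notMem ha]
    exact Set.indicator_nonneg (fun _ _ => zero_le_one) b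

theorem measureReal_mul_measureReal_le_measureReal_inter
    (hμ : ∀ a b, μ.real {a} * μ.real {b} ≤ μ.real {a ⊓ b} * μ.real {a ⊔ b})
    {s t : Set α} (hs : IsUpperSet s) (ht : IsUpperSet t) :
    μ.real s * μ.real t ≤ μ.real (s ∩ t) := by
  have h := fkg _ _ (fun a => μ.real {a}) (fun _ => measureReal_nonneg)
    (Set.indicator_nonneg fun _ _ => zero_le_one) (Set.indicator_nonneg fun _ _ => zero_le_one)
    hs.monotone_indicator_one ht.monotone_indicator_one hμ
  have h_univ : ∑ a, μ.real {a} = 1 := by simp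
  rw [h_univ, one_mul] at h
  rwa [measureReal_eq_sum_mul_indicator μ s, measureReal_eq_sum_mul_indicator μ t,
    measureReal_eq_sum_mul_indicator μ (s ∩ t), Set.inter_indicator_one]

theorem prod_measureReal_le_measureReal_biInter
    (hμ : ∀ a b, μ.real {a} * μ.real {b} ≤ μ.real {a ⊓ b} * μ.real {a ⊔ b})
    {ι : Type*} (I : Finset ι) {s : ι → Set α} (hs : ∀ i ∈ I, IsUpperSet (s i)) :
    ∏ i ∈ I, μ.real (s i) ≤ μ.real (⋂ i ∈ I, s i) := by
  classical
  induction I using Finset.induction_on with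
  | empty => simp
  | insert i I hi ih =>
    rw [Finset.prod_insert hi, Finset.set_biInter_insert]
    calc μ.real (s i) * ∏ j ∈ I, μ.real (s j)
        ≤ μ.real (s i) * μ.real (⋂ j ∈ I, s j) :=
          mul_le_mul_of_nonneg_left (ih fun j hj => hs j (Finset.mem_insert_of_mem hj))
            measureReal_nonneg
      _ ≤ μ.real (s i ∩ ⋂ j ∈ I, s j) :=
          measureReal_mul_measureReal_le_measureReal_inter μ hμ
            (hs i (Finset.mem_insert_self i I))
            (isUpperSet_iInter₂ fun j hj => hs j (Finset.mem_insert_of_mem hj))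

end Harris

theorem Measure.pi_real_singleton_mul_eq_inf_sup {ι β : Type*} [Fintype ι] [LinearOrder β]
    [MeasurableSpace β] [MeasurableSingletonClass β] (μ : ι → Measure β)
    [∀ i, SigmaFinite (μ i)] (a b : ι → β) :
    (Measure.pi μ).real {a} * (Measure.pi μ).real {b} =
      (Measure.pi μ).real {a ⊓ b} * (Measure.pi μ).real {a ⊔ b} := by
  simp only [measureReal_def, Measure.pi_singleton, ← ENNReal.toReal_mul,
    ← Finset.prod_mul_distrib]
  congr 1
  refine Finset.prod_congr rfl fun i _ => ?_
  rcases le_total (a i) (b i) with h | h <;> simp [h, mul_comm]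

section Bernoulli

variable {q : ℝ} (hq0 : 0 ≤ q) (hq1 : q ≤ 1)

lemma bernoulliMeasure_singleton_true : bernoulliMeasure q {true} = ENNReal.ofReal q := by
  simp [bernoulliMeasure]

lemma bernoulliMeasure_singleton_false : bernoulliMeasure q {false} = ENNReal.ofReal (1 - q) := by
  simp [bernoulliMeasure]

include hq0 hq1

lemma isProbabilityMeasure_bernoulliMeasure : IsProbabilityMeasure (bernoulliMeasure q) := by
  constructor
  simp [bernoulliMeasure, ← ENNReal.ofReal_add hq0 (sub_nonneg.2 hq1)]

lemma isProbabilityMeasure_productBernoulli (η : ℕ) :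
    IsProbabilityMeasure (productBernoulli η q) :=
  have := isProbabilityMeasure_bernoulliMeasure hq0 hq1
  Measure.pi.instIsProbabilityMeasure _

variable {η : ℕ}

lemma productBernoulli_real_singleton_mul_le (a b : Fin η → Bool) :
    (productBernoulli η q).real {a} * (productBernoulli η q).real {b} ≤
      (productBernoulli η q).real {a ⊓ b} * (productBernoulli η q).real {a ⊔ b} :=
  have := isProbabilityMeasure_bernoulliMeasure hq0 hq1
  (Measure.pi_real_singleton_mul_eq_inf_sup _ a b).le

lemma productBernoulli_real_setOf_apply_eq_true (j : Fin η) :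
    (productBernoulli η q).real {ω | ω j = true} = q := by
  have := isProbabilityMeasure_bernoulliMeasure hq0 hq1
  have h_pi : {ω : Fin η → Bool | ω j = true} = (({j} : Finset (Fin η)) : Set (Fin η)).pi
      fun _ => {true} := by
    ext ω; simp
  rw [productBernoulli, measureReal_def, h_pi, Measure.pi_pi_finset, Finset.prod_singleton,
    bernoulliMeasure_singleton_true, ENNReal.toReal_ofReal hq0]

lemma productBernoulli_real_setOf_exists_eq_true (A : Finset (Fin η)) :
    (productBernoulli η q).real {ω | ∃ j ∈ A, ω j = true} = 1 - (1 - q) ^ A.card := by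
  have := isProbabilityMeasure_bernoulliMeasure hq0 hq1
  have := isProbabilityMeasure_productBernoulli hq0 hq1 η
  have h_pi : {ω : Fin η → Bool | ∃ j ∈ A, ω j = true} = ((A : Set (Fin η)).pi
      fun _ => {false})ᶜ := by
    ext ω; simp
  rw [h_pi, probReal_compl_eq_one_sub (MeasurableSet.of_discrete), productBernoulli,
    measureReal_def, Measure.pi_pi_finset, Finset.prod_const, bernoulliMeasure_singleton_false,
    ← ENNReal.ofReal_pow (sub_nonneg.2 hq1),
    ENNReal.toReal_ofReal (pow_nonneg (sub_nonneg.2 hq1) _)]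

end Bernoulli

lemma exp_neg_le_productBernoulli_real_exists_ne {q : ℝ} (hq0 : 0 < q) (hq1 : q ≤ 1) {η : ℕ}
    {S : Finset (Fin η)} {s : Fin η} (hs : s ∈ S) (hS : S ≠ {s}) :
    Real.exp (-(2 / q * (1 / S.card))) ≤
      (productBernoulli η q).real {ω | ∃ j ∈ S, j ≠ s ∧ ω j = true} := by
  classical
  have h_card : (S.card : ℝ) ≤ 2 * (S.erase s).card := by
    exact_mod_cast Finset.card_le_two_mul_card_erase hs hS
  have h_card_pos : (0 : ℝ) < S.card := by exact_mod_cast Finset.card_pos.2 ⟨s, hs⟩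
  have h_erase : {ω : Fin η → Bool | ∃ j ∈ S, j ≠ s ∧ ω j = true} =
      {ω | ∃ j ∈ S.erase s, ω j = true} := by
    ext; simp [and_assoc, and_left_comm]
  rw [h_erase, productBernoulli_real_setOf_exists_eq_true hq0.le hq1]
  refine le_trans (Real.exp_le_exp.2 ?_)
    (Real.exp_neg_inv_le_one_sub_one_sub_pow hq1 (by nlinarith))
  rw [neg_le_neg_iff, div_mul_div_comm, mul_one, ← one_div,
    div_le_div_iff₀ (by nlinarith) (by positivity)]
  nlinarith

noncomputable def potential {η L : ℕ} (σ : Fin L → Finset (Fin η)) (s : Fin η) : ℝ :=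
  ∑ t ∈ Finset.univ.filter (fun t : Fin L => s ∈ σ t), (1 : ℝ) / (σ t).card

lemma exp_neg_mul_potential_le_prod_productBernoulli_real {q : ℝ} (hq0 : 0 < q) (hq1 : q ≤ 1)
    {η L : ℕ} (σ : Fin L → Finset (Fin η)) {s : Fin η} (hNotLost : ∀ t, σ t ≠ {s}) :
    Real.exp (-(2 / q * potential σ s)) ≤
      ∏ t ∈ Finset.univ.filter (fun t : Fin L => s ∈ σ t),
        (productBernoulli η q).real {ω | ∃ j ∈ σ t, j ≠ s ∧ ω j = true} := by
  rw [potential, Finset.mul_sum, ← Finset.sum_neg_distrib, Real.exp_sum]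
  exact Finset.prod_le_prod (fun _ _ => by positivity) fun t ht =>
    exp_neg_le_productBernoulli_real_exists_ne hq0 hq1 (Finset.mem_filter.1 ht).2 (hNotLost t)

lemma mul_exp_neg_mul_potential_le_productBernoulli_real {q : ℝ} (hq0 : 0 < q)
    (hq1 : q ≤ 1) {η L : ℕ} (σ : Fin L → Finset (Fin η)) {s : Fin η}
    (hNotLost : ∀ t, σ t ≠ {s}) :
    q * Real.exp (-(2 / q * potential σ s)) ≤ (productBernoulli η q).real
      {ω | ω s = true ∧ ∀ t : Fin L, s ∈ σ t → ∃ j ∈ σ t, j ≠ s ∧ ω j = true} := by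
  have := isProbabilityMeasure_productBernoulli hq0.le hq1 η
  have h_fkg := productBernoulli_real_singleton_mul_le hq0.le hq1 (η := η)
  set P := productBernoulli η q
  set T := Finset.univ.filter (fun t : Fin L => s ∈ σ t)
  set B : Fin L → Set (Fin η → Bool) := fun t => {ω | ∃ j ∈ σ t, j ≠ s ∧ ω j = true}
  have hB : ∀ t ∈ T, IsUpperSet (B t) := fun t _ a b hab ⟨j, hj, hne, ha⟩ =>
    ⟨j, hj, hne, Bool.eq_true_of_le (hab j) ha⟩
  have h_event : {ω : Fin η → Bool | ω s = true ∧
      ∀ t : Fin L, s ∈ σ t → ∃ j ∈ σ t, j ≠ s ∧ ω j = true} =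
      {ω | ω s = true} ∩ ⋂ t ∈ T, B t := by
    ext; simp [T, B]
  rw [h_event]
  calc q * Real.exp (-(2 / q * potential σ s))
      ≤ P.real {ω | ω s = true} * ∏ t ∈ T, P.real (B t) := by
        rw [productBernoulli_real_setOf_apply_eq_true hq0.le hq1]
        gcongr
        exact exp_neg_mul_potential_le_prod_productBernoulli_real hq0 hq1 σ hNotLost
    _ ≤ P.real {ω | ω s = true} * P.real (⋂ t ∈ T, B t) := by
        gcongr
        exact prod_measureReal_le_measureReal_biInter P h_fkg T hB
    _ ≤ _ := measureReal_mul_measureReal_le_measureReal_inter P h_fkg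
        (fun a b hab ha => Bool.eq_true_of_le (hab s) ha) (isUpperSet_iInter₂ hB)

theorem per_receiver_failure_probability_general
    (η : ℕ) (Δ : ℝ) (hΔ1 : 2 ≤ Δ) (hΔ2 : Δ ≤ (η : ℝ))
    {L : ℕ} (σ : Fin L → Finset (Fin η)) (sStar : Fin η)
    (hNotLost : ∀ t : Fin L, σ t ≠ {sStar})
    (hPot : (∑ t ∈ Finset.univ.filter (fun t : Fin L => sStar ∈ σ t),
        (1 : ℝ) / (σ t).card) ≤ Δ * Real.log η / (6 * η)) :
    ENNReal.ofReal (1 / (η : ℝ) ^ 2) ≤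
      productBernoulli η (Δ / (2 * η))
        {ω | ω sStar = true ∧
          ∀ t : Fin L, sStar ∈ σ t → ∃ j ∈ σ t, j ≠ sStar ∧ ω j = true} := by
  have hη0 : (0 : ℝ) < η := by linarith
  set q := Δ / (2 * η) with hq
  have hq0 : 0 < q := by positivity
  have hq1 : q ≤ 1 := by rw [hq, div_le_one (by positivity)]; linarith
  have h_inv_le_q : 1 / η ≤ q := by rw [hq, div_le_div_iff₀ hη0 (by positivity)]; nlinarith
  have h_potential : 2 / q * potential σ sStar ≤ Real.log η := calc
    2 / q * potential σ sStar ≤ 2 / q * (Δ * Real.log η / (6 * η)) := by gcongr; exact hPot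
    _ = 2 / 3 * Real.log η := by rw [hq]; field_simp; ring
    _ ≤ Real.log η := by linarith [Real.log_nonneg (by linarith : (1 : ℝ) ≤ η)]
  apply ENNReal.ofReal_le_of_le_toReal
  rw [← measureReal_def]
  calc 1 / (η : ℝ) ^ 2 = 1 / η * Real.exp (-Real.log η) := by
        rw [Real.exp_neg, Real.exp_log hη0]; ring
    _ ≤ q * Real.exp (-(2 / q * potential σ sStar)) := by gcongr
    _ ≤ _ := mul_exp_neg_mul_potential_le_productBernoulli_real hq0 hq1 σ hNotLost

/-- **Per-receiver failure probability in the acknowledgment lower bound.**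
Let `η ≥ 2`, `2 ≤ Δ ≤ η`, `q = Δ/(2η)`. Let `σ : Fin L → Finset (Fin η)` be a
transmission schedule and `sStar` a sender that is not lost in `σ` and whose
potential `Φ_σ(sStar) = Σ_{t : sStar ∈ σ_t} 1/|σ_t|` is at most `Δ·ln η/(6η)`.
Then with probability at least `1/η²` (over the random neighborhood of a fixed
receiver), the receiver is a neighbor of `sStar` yet every transmission of `sStar`
collides at the receiver. -/
theorem per_receiver_failure_probability
    (η : ℕ) (hη : 2 ≤ η) (Δ : ℝ) (hΔ1 : 2 ≤ Δ) (hΔ2 : Δ ≤ (η : ℝ))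
    {L : ℕ} (σ : Fin L → Finset (Fin η)) (sStar : Fin η)
    (hNotLost : ∀ t : Fin L, σ t ≠ {sStar})
    (hPot : (∑ t ∈ Finset.univ.filter (fun t : Fin L => sStar ∈ σ t),
        (1 : ℝ) / (σ t).card) ≤ Δ * Real.log η / (6 * η)) :
    ENNReal.ofReal (1 / (η : ℝ) ^ 2) ≤
      productBernoulli η (Δ / (2 * η))
        {ω | ω sStar = true ∧
          ∀ t : Fin L, sStar ∈ σ t → ∃ j ∈ σ t, j ≠ sStar ∧ ω j = true} :=
  per_receiver_failure_probability_general η Δ hΔ1 hΔ2 σ sStar hNotLost hPot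
end
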